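/- Let Ω ⊂ E be nonempty, closed, and (ε,δ)-subregular at x̂ with respect to S ⊆ Ω ∩ B_δ(x̂). Define U = {x ∈ E : P_Ω x ⊂ B_δ(x̂)}. Then for all x ∈ U, all x₊ ∈ P_Ω x, and all x̄ ∈ S, ‖x₊ − x̄‖ ≤ (1+ε)‖x − x̄‖. -/

import Mathlib

open RealInnerProductSpace Metric

noncomputable section

variable {E : Type*} [NormedAddCommGroup E] [InnerProductSpace ℝ E]

/-- The (possibly multivalued) metric projector onto a set. -/
def projSet (Ω : Set E) (x : E) : Set E :=
  {y | y ∈ Ω ∧ ‖x - y‖ = Metric.infDist x Ω}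

/-- The (possibly multivalued) reflector across a set. -/
def reflSet (Ω : Set E) (x : E) : Set E :=
  {w | ∃ y ∈ projSet Ω x, w = (2 : ℝ) • y - x}

/-- Pointwise composition of the two reflectors. -/
def rARB (A B : Set E) (x : E) : Set E :=
  ⋃ y ∈ reflSet B x, reflSet A y

/-- The (possibly multivalued) Douglas–Rachford operator. -/
def TDR (A B : Set E) (x : E) : Set E :=
  {w | ∃ z ∈ rARB A B x, w = ((1 : ℝ) / 2) • (z + x)}

/-- The proximal normal cone `cone (P_Ω⁻¹ x - x)`. -/
def pnCone (Ω : Set E) (x : E) : Set E :=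
  {v | ∃ t : ℝ, 0 ≤ t ∧ ∃ z : E, x ∈ projSet Ω z ∧ v = t • (z - x)}

/-!
Write `p` for the projection of `x` and `y` for a point of `S`. Expanding
`x - y = (x - p) - (y - p)` and bounding the cross term by subregularity gives
`‖p - y‖² ≤ ‖x - y‖² - ‖x - p‖² + 2ε ‖x - p‖ ‖p - y‖`, i.e.
`(‖p - y‖ - ε ‖x - p‖)² ≤ ‖x - y‖² - (1 - ε²) ‖x - p‖² ≤ ‖x - y‖²` when `ε ≤ 1`;
since `‖x - p‖ ≤ ‖x - y‖` this yields `‖p - y‖ ≤ (1 + ε) ‖x - y‖`.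
For `ε ≥ 1` the triangle inequality already gives `‖p - y‖ ≤ 2 ‖x - y‖`.
-/

theorem norm_sub_le_of_mem_projSet {F : Type*} [NormedAddCommGroup F] {Ω : Set F}
    {x p y : F} (hp : p ∈ projSet Ω x) (hy : y ∈ Ω) : ‖x - p‖ ≤ ‖x - y‖ := by
  rw [hp.2, ← dist_eq_norm]
  exact infDist_le_dist_of_mem hy

theorem sub_mem_pnCone_of_mem_projSet {Ω : Set E} {x p : E} (hp : p ∈ projSet Ω x) :
    x - p ∈ pnCone Ω p :=
  ⟨1, zero_le_one, x, hp, (one_smul ℝ _).symm⟩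

theorem le_one_add_mul_of_sq_le {ε r c d : ℝ} (hε₀ : 0 ≤ ε) (hε₁ : ε ≤ 1) (hr : 0 ≤ r)
    (hrc : r ≤ c) (h : d ^ 2 ≤ c ^ 2 - r ^ 2 + 2 * ε * r * d) : d ≤ (1 + ε) * c := by
  have hsq : (d - ε * r) ^ 2 ≤ c ^ 2 := by
    nlinarith [mul_nonneg (mul_nonneg (sub_nonneg.2 hε₁) (by linarith : 0 ≤ 1 + ε)) (sq_nonneg r)]
  have hdc : d - ε * r ≤ c := (abs_le_of_sq_le_sq' hsq (hr.trans hrc)).2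
  nlinarith [mul_le_mul_of_nonneg_left hrc hε₀]

theorem norm_sub_le_one_add_mul_of_inner_le {x p y : E} {ε : ℝ} (hε : 0 ≤ ε)
    (hp : ‖x - p‖ ≤ ‖x - y‖) (hinner : ⟪x - p, y - p⟫ ≤ ε * ‖x - p‖ * ‖y - p‖) :
    ‖p - y‖ ≤ (1 + ε) * ‖x - y‖ := by
  rcases le_total ε 1 with hε₁ | hε₁
  · have hexpand : ‖x - y‖ ^ 2 = ‖x - p‖ ^ 2 - 2 * ⟪x - p, y - p⟫ + ‖p - y‖ ^ 2 := by
      rw [norm_sub_rev p y, ← norm_sub_sq_real, sub_sub_sub_cancel_right]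
    rw [norm_sub_rev y p] at hinner
    exact le_one_add_mul_of_sq_le hε hε₁ (norm_nonneg _) hp (by nlinarith)
  · calc ‖p - y‖ ≤ ‖p - x‖ + ‖x - y‖ := norm_sub_le_norm_sub_add_norm_sub p x y
      _ ≤ (1 + ε) * ‖x - y‖ := by
        rw [norm_sub_rev p x]; nlinarith [norm_nonneg (x - y)]

theorem proj_subregular_nonexpansive_general
    (Ω : Set E)
    (S : Set E) (xhat : E) (ε δ : ℝ) (hε : 0 ≤ ε)
    (hSsub : S ⊆ Ω ∩ Metric.closedBall xhat δ)
    (hsub : ∀ x ∈ Metric.closedBall xhat δ ∩ Ω, ∀ xbar ∈ S ∩ Metric.closedBall xhat δ,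
        ∀ v ∈ pnCone Ω x, ⟪v, xbar - x⟫ ≤ ε * ‖v‖ * ‖xbar - x‖) :
    ∀ x ∈ {x : E | projSet Ω x ⊆ Metric.closedBall xhat δ},
      ∀ xp ∈ projSet Ω x, ∀ xbar ∈ S, ‖xp - xbar‖ ≤ (1 + ε) * ‖x - xbar‖ := by
  intro x hx xp hxp xbar hxbar
  obtain ⟨hxbarΩ, hxbarB⟩ := hSsub hxbar
  exact norm_sub_le_one_add_mul_of_inner_le hε (norm_sub_le_of_mem_projSet hxp hxbarΩ)
    (hsub xp ⟨hx hxp, hxp.1⟩ xbar ⟨hxbar, hxbarB⟩ (x - xp) (sub_mem_pnCone_of_mem_projSet hxp))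

/-- The projector onto an `(ε,δ)`-subregular set is `(S, 2ε+ε²)`-nonexpansive on `U`. -/
theorem proj_subregular_nonexpansive
    (Ω : Set E) (hΩ : Ω.Nonempty) (hΩc : IsClosed Ω)
    (S : Set E) (xhat : E) (ε δ : ℝ) (hε : 0 ≤ ε) (hδ : 0 < δ)
    (hSsub : S ⊆ Ω ∩ Metric.closedBall xhat δ)
    (hsub : ∀ x ∈ Metric.closedBall xhat δ ∩ Ω, ∀ xbar ∈ S ∩ Metric.closedBall xhat δ,
        ∀ v ∈ pnCone Ω x, ⟪v, xbar - x⟫ ≤ ε * ‖v‖ * ‖xbar - x‖) :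
    ∀ x ∈ {x : E | projSet Ω x ⊆ Metric.closedBall xhat δ},
      ∀ xp ∈ projSet Ω x, ∀ xbar ∈ S, ‖xp - xbar‖ ≤ (1 + ε) * ‖x - xbar‖ :=
  proj_subregular_nonexpansive_general Ω S xhat ε δ hε hSsub hsub
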